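/- arXiv:2508.14777 — 4 statements merged into one kernel-verified Lean document; each statement's English description precedes it below -/
import Mathlib

section
/- The maximal non-increasing rearrangement is subadditive: for all measurable functions u, v on a set E of finite measure, (|u| + |v|)**(s) ≤ u**(s) + v**(s) for every s > 0. -/
open MeasureTheory Set
open scoped ENNReal

/-- Decreasing rearrangement of `u` restricted to `E`. -/
noncomputable def decRe {n : ℕ} (E : Set (Fin n → ℝ)) (u : (Fin n → ℝ) → ℝ) (s : ℝ) : ℝ :=
  sInf {t : ℝ | 0 ≤ t ∧ volume {x ∈ E | t < |u x|} ≤ ENNReal.ofReal s}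

/-- Maximal non-increasing rearrangement `u**(s) = s⁻¹ ∫₀^s u*`. -/
noncomputable def maxRe {n : ℕ} (E : Set (Fin n → ℝ)) (u : (Fin n → ℝ) → ℝ) (s : ℝ) : ℝ≥0∞ :=
  (ENNReal.ofReal s)⁻¹ * ∫⁻ t in Set.Ioo (0 : ℝ) s, ENNReal.ofReal (decRe E u t)

/-!
For `s > 0`, `∫₀^s f*` is the `K`-functional of the pair `(L¹, L^∞)`: it equals
`inf_{a ≥ 0} (s a + ∫ (f - a)₊)`, the infimum being attained at `a = f*(s)`; both sides are
computed as `∫₀^∞ min(s, μ{f > τ}) dτ`. Since `(f + g - a - b)₊ ≤ (f - a)₊ + (g - b)₊`, the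
`K`-functional, and hence `∫₀^s f*`, is subadditive; dividing by `s` gives the claim.
-/

open Filter Topology

namespace MeasureTheory

variable {α : Type*} [MeasurableSpace α] {μ : Measure α} {f g : α → ℝ} {a s t τ : ℝ}

theorem setLIntegral_Ioi_min_le (φ : ℝ → ℝ≥0∞) (c : ℝ≥0∞) (ha : 0 ≤ a) :
    ∫⁻ τ in Ioi 0, min c (φ τ) ≤ c * ENNReal.ofReal a + ∫⁻ τ in Ioi a, φ τ :=
  calc ∫⁻ τ in Ioi 0, min c (φ τ)
      = ∫⁻ τ in Ioc 0 a ∪ Ioi a, min c (φ τ) := by rw [Ioc_union_Ioi_eq_Ioi ha]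
    _ ≤ (∫⁻ τ in Ioc 0 a, min c (φ τ)) + ∫⁻ τ in Ioi a, min c (φ τ) := lintegral_union_le _ _ _
    _ ≤ (∫⁻ _ in Ioc 0 a, c) + ∫⁻ τ in Ioi a, φ τ := by
        gcongr <;> simp
    _ = c * ENNReal.ofReal a + ∫⁻ τ in Ioi a, φ τ := by
        rw [setLIntegral_const, Real.volume_Ioc, sub_zero]

theorem setLIntegral_Ioi_min_eq {φ : ℝ → ℝ≥0∞} {c : ℝ≥0∞} (ha : 0 ≤ a)
    (h_below : ∀ τ ∈ Ioo 0 a, c ≤ φ τ) (h_above : ∀ τ ∈ Ioi a, φ τ ≤ c) :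
    ∫⁻ τ in Ioi 0, min c (φ τ) = c * ENNReal.ofReal a + ∫⁻ τ in Ioi a, φ τ := by
  refine le_antisymm (setLIntegral_Ioi_min_le φ c ha) ?_
  have h_disj : Disjoint (Ioo 0 a) (Ioi a) := disjoint_left.2 fun _ h h' => h.2.not_gt h'
  calc c * ENNReal.ofReal a + ∫⁻ τ in Ioi a, φ τ
      = ∫⁻ τ in Ioo 0 a ∪ Ioi a, min c (φ τ) := by
        rw [lintegral_union measurableSet_Ioi h_disj,
          setLIntegral_congr_fun measurableSet_Ioo fun τ hτ => min_eq_left (h_below τ hτ),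
          setLIntegral_congr_fun measurableSet_Ioi fun τ hτ => min_eq_right (h_above τ hτ),
          setLIntegral_const, Real.volume_Ioo, sub_zero]
    _ ≤ ∫⁻ τ in Ioi 0, min c (φ τ) :=
        lintegral_mono_set (union_subset Ioo_subset_Ioi_self (Ioi_subset_Ioi ha))

noncomputable def distributionFunction (μ : Measure α) (f : α → ℝ) (τ : ℝ) : ℝ≥0∞ :=
  μ {x | τ < f x}

noncomputable def rearrangement (μ : Measure α) (f : α → ℝ) (t : ℝ) : ℝ :=
  sInf {c | 0 ≤ c ∧ distributionFunction μ f c ≤ ENNReal.ofReal t}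

noncomputable def splitCost (μ : Measure α) (f : α → ℝ) (s a : ℝ) : ℝ≥0∞ :=
  ENNReal.ofReal s * ENNReal.ofReal a + ∫⁻ x, ENNReal.ofReal (f x - a) ∂μ

theorem distributionFunction_antitone (μ : Measure α) (f : α → ℝ) :
    Antitone (distributionFunction μ f) :=
  fun _ _ h => measure_mono fun _ hx => h.trans_lt hx

theorem distributionFunction_le_of_forall_gt {r : ℝ≥0∞}
    (h : ∀ c, a < c → distributionFunction μ f c ≤ r) : distributionFunction μ f a ≤ r := by
  obtain ⟨c, hc_anti, hc_gt, hc_lim⟩ := exists_seq_strictAnti_tendsto a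
  have h_union : {x | a < f x} = ⋃ n, {x | c n < f x} := by
    ext x
    simp only [mem_iUnion]
    refine ⟨fun hx => (hc_lim.eventually (gt_mem_nhds hx)).exists, ?_⟩
    rintro ⟨n, hn⟩
    exact (hc_gt n).trans hn
  have h_mono : Monotone fun n => {x | c n < f x} :=
    fun _ _ hnm _ hx => (hc_anti.antitone hnm).trans_lt hx
  rw [distributionFunction, h_union, h_mono.measure_iUnion]
  exact iSup_le fun n => h _ (hc_gt n)

theorem tendsto_distributionFunction_atTop [IsFiniteMeasure μ] (hf : Measurable f) :
    Tendsto (distributionFunction μ f) atTop (𝓝 0) := by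
  have h_empty : ⋂ τ : ℝ, {x | τ < f x} = ∅ :=
    eq_empty_of_forall_notMem fun x hx => lt_irrefl (f x) (mem_iInter.1 hx (f x))
  have := tendsto_measure_iInter_atTop (μ := μ) (s := fun τ : ℝ => {x | τ < f x})
    (fun τ => (measurableSet_lt measurable_const hf).nullMeasurableSet)
    (fun _ _ h _ hx => h.trans_lt hx) ⟨0, measure_ne_top _ _⟩
  rwa [h_empty, measure_empty] at this

theorem rearrangement_nonneg : 0 ≤ rearrangement μ f t :=
  Real.sInf_nonneg fun _ hc => hc.1

theorem exists_distributionFunction_le [IsFiniteMeasure μ] (hf : Measurable f) (ht : 0 < t) :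
    ∃ c, 0 ≤ c ∧ distributionFunction μ f c ≤ ENNReal.ofReal t :=
  (((tendsto_distributionFunction_atTop hf).eventually
    (gt_mem_nhds (ENNReal.ofReal_pos.2 ht))).and (eventually_ge_atTop 0)).exists.imp
    fun _ hc => ⟨hc.2, hc.1.le⟩

theorem distributionFunction_rearrangement_le [IsFiniteMeasure μ] (hf : Measurable f)
    (ht : 0 < t) : distributionFunction μ f (rearrangement μ f t) ≤ ENNReal.ofReal t := by
  refine distributionFunction_le_of_forall_gt fun c hc => ?_
  obtain ⟨c', hc'S, hc'c⟩ :=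
    (csInf_lt_iff ⟨0, fun _ h => h.1⟩ (exists_distributionFunction_le hf ht)).1 hc
  exact (distributionFunction_antitone μ f hc'c.le).trans hc'S.2

theorem lt_rearrangement_iff [IsFiniteMeasure μ] (hf : Measurable f) (ht : 0 < t)
    (hτ : 0 ≤ τ) : τ < rearrangement μ f t ↔ ENNReal.ofReal t < distributionFunction μ f τ := by
  refine ⟨fun h => not_le.1 fun hτt => h.not_ge (csInf_le ⟨0, fun _ h => h.1⟩ ⟨hτ, hτt⟩),
    fun h => not_le.1 fun htτ => h.not_ge ?_⟩
  exact (distributionFunction_antitone μ f htτ).trans (distributionFunction_rearrangement_le hf ht)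

theorem antitoneOn_rearrangement [IsFiniteMeasure μ] (hf : Measurable f) :
    AntitoneOn (rearrangement μ f) (Ioi 0) :=
  fun _ ht _ _ htt' => csInf_le_csInf ⟨0, fun _ h => h.1⟩ (exists_distributionFunction_le hf ht)
    fun _ hc => ⟨hc.1, hc.2.trans (ENNReal.ofReal_le_ofReal htt')⟩

theorem setLIntegral_rearrangement_eq [IsFiniteMeasure μ] (hf : Measurable f) :
    ∫⁻ t in Ioo 0 s, ENNReal.ofReal (rearrangement μ f t) =
      ∫⁻ τ in Ioi 0, min (ENNReal.ofReal s) (distributionFunction μ f τ) := by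
  have h_meas : AEMeasurable (rearrangement μ f) (volume.restrict (Ioo 0 s)) :=
    aemeasurable_restrict_of_antitoneOn measurableSet_Ioo
      ((antitoneOn_rearrangement hf).mono Ioo_subset_Ioi_self)
  rw [lintegral_eq_lintegral_meas_lt _ (ae_of_all _ fun _ => rearrangement_nonneg) h_meas]
  refine setLIntegral_congr_fun measurableSet_Ioi fun τ hτ => ?_
  have h_fin : distributionFunction μ f τ ≠ ∞ := measure_ne_top _ _
  have h_set : {t | τ < rearrangement μ f t} ∩ Ioo 0 s =
      Ioo 0 (min s (distributionFunction μ f τ).toReal) := by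
    ext t
    simp only [mem_inter_iff, mem_Ioo, lt_min_iff]
    constructor
    · rintro ⟨h, ht, hts⟩
      exact ⟨ht, hts, (ENNReal.ofReal_lt_iff_lt_toReal ht.le h_fin).1
        ((lt_rearrangement_iff hf ht (le_of_lt hτ)).1 h)⟩
    · rintro ⟨ht, hts, h⟩
      exact ⟨(lt_rearrangement_iff hf ht (le_of_lt hτ)).2
        ((ENNReal.ofReal_lt_iff_lt_toReal ht.le h_fin).2 h), ht, hts⟩
  rw [Measure.restrict_apply' measurableSet_Ioo, h_set, Real.volume_Ioo, sub_zero,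
    ENNReal.ofReal_min, ENNReal.ofReal_toReal h_fin]

theorem setLIntegral_Ioi_distributionFunction (hf : Measurable f) (a : ℝ) :
    ∫⁻ τ in Ioi a, distributionFunction μ f τ = ∫⁻ x, ENNReal.ofReal (f x - a) ∂μ := by
  have h_pos : ∀ x, ENNReal.ofReal (f x - a) = ENNReal.ofReal (max (f x - a) 0) := fun x => by
    rw [ENNReal.ofReal_max, ENNReal.ofReal_zero, max_eq_left zero_le]
  simp_rw [h_pos]
  rw [lintegral_eq_lintegral_meas_lt (f := fun x => max (f x - a) 0) _
    (ae_of_all _ fun _ => le_max_right _ _) ((hf.sub_const a).max measurable_const).aemeasurable,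
    ← (measurePreserving_add_left volume a).setLIntegral_comp_preimage_emb
      (measurableEmbedding_addLeft a), preimage_const_add_Ioi, sub_self]
  refine setLIntegral_congr_fun measurableSet_Ioi fun σ hσ => ?_
  have hσ' : ¬σ < 0 := not_lt.2 (le_of_lt hσ)
  simp only [distributionFunction, lt_max_iff, lt_sub_iff_add_lt', hσ', or_false]

theorem setLIntegral_rearrangement_le_splitCost [IsFiniteMeasure μ] (hf : Measurable f)
    (ha : 0 ≤ a) :
    ∫⁻ t in Ioo 0 s, ENNReal.ofReal (rearrangement μ f t) ≤ splitCost μ f s a := by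
  rw [setLIntegral_rearrangement_eq hf, splitCost, ← setLIntegral_Ioi_distributionFunction hf]
  exact setLIntegral_Ioi_min_le _ _ ha

theorem setLIntegral_rearrangement_eq_splitCost [IsFiniteMeasure μ] (hf : Measurable f)
    (hs : 0 < s) :
    ∫⁻ t in Ioo 0 s, ENNReal.ofReal (rearrangement μ f t) =
      splitCost μ f s (rearrangement μ f s) := by
  rw [setLIntegral_rearrangement_eq hf, splitCost, ← setLIntegral_Ioi_distributionFunction hf]
  refine setLIntegral_Ioi_min_eq rearrangement_nonneg (fun τ hτ => ?_) fun τ hτ => ?_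
  · exact ((lt_rearrangement_iff hf hs hτ.1.le).1 hτ.2).le
  · exact (distributionFunction_antitone μ f (le_of_lt hτ)).trans
      (distributionFunction_rearrangement_le hf hs)

theorem splitCost_add_le (hf : Measurable f) (ha : 0 ≤ a) {b : ℝ} (hb : 0 ≤ b) :
    splitCost μ (f + g) s (a + b) ≤ splitCost μ f s a + splitCost μ g s b := by
  calc splitCost μ (f + g) s (a + b)
      ≤ ENNReal.ofReal s * ENNReal.ofReal (a + b) +
          ∫⁻ x, ENNReal.ofReal (f x - a) + ENNReal.ofReal (g x - b) ∂μ := by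
        unfold splitCost
        gcongr with x
        rw [Pi.add_apply, add_sub_add_comm]
        exact ENNReal.ofReal_add_le
    _ = splitCost μ f s a + splitCost μ g s b := by
        rw [lintegral_add_left (hf.sub_const a).ennreal_ofReal, ENNReal.ofReal_add ha hb,
          splitCost, splitCost]
        ring

theorem setLIntegral_rearrangement_add_le [IsFiniteMeasure μ] (hf : Measurable f)
    (hg : Measurable g) (hs : 0 < s) :
    ∫⁻ t in Ioo 0 s, ENNReal.ofReal (rearrangement μ (f + g) t) ≤
      (∫⁻ t in Ioo 0 s, ENNReal.ofReal (rearrangement μ f t)) +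
        ∫⁻ t in Ioo 0 s, ENNReal.ofReal (rearrangement μ g t) := by
  rw [setLIntegral_rearrangement_eq_splitCost hf hs, setLIntegral_rearrangement_eq_splitCost hg hs]
  exact (setLIntegral_rearrangement_le_splitCost (hf.add hg)
    (add_nonneg rearrangement_nonneg rearrangement_nonneg)).trans
    (splitCost_add_le hf rearrangement_nonneg rearrangement_nonneg)

end MeasureTheory

theorem decRe_eq_rearrangement {n : ℕ} (E : Set (Fin n → ℝ)) {u : (Fin n → ℝ) → ℝ}
    (hu : Measurable u) : decRe E u = rearrangement (volume.restrict E) fun x => |u x| := by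
  ext t
  unfold decRe rearrangement distributionFunction
  congr! 4 with c
  rw [Measure.restrict_apply (measurableSet_lt measurable_const hu.abs), inter_comm]
  rfl

theorem stmt1_general {n : ℕ} (E : Set (Fin n → ℝ))
    (hEfin : volume E < ⊤) (u v : (Fin n → ℝ) → ℝ)
    (hu : Measurable u) (hv : Measurable v) :
    ∀ s : ℝ, 0 < s →
      maxRe E (fun x => |u x| + |v x|) s ≤ maxRe E u s + maxRe E v s := by
  intro s hs
  have : IsFiniteMeasure (volume.restrict E) := isFiniteMeasure_restrict.2 hEfin.ne
  have h_abs : (fun x => |(|u x| + |v x|)|) = (fun x => |u x|) + fun x => |v x| :=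
    funext fun x => abs_of_nonneg (by positivity)
  have hw : Measurable fun x => |u x| + |v x| := hu.abs.add hv.abs
  rw [maxRe, maxRe, maxRe, decRe_eq_rearrangement E hu, decRe_eq_rearrangement E hv,
    decRe_eq_rearrangement E hw, h_abs, ← mul_add]
  gcongr
  exact setLIntegral_rearrangement_add_le hu.abs hv.abs hs

/-- Subadditivity of the maximal rearrangement: `(|u|+|v|)** ≤ u** + v**`. -/
theorem stmt1 {n : ℕ} (E : Set (Fin n → ℝ)) (hE : MeasurableSet E)
    (hEfin : volume E < ⊤) (u v : (Fin n → ℝ) → ℝ)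
    (hu : Measurable u) (hv : Measurable v) :
    ∀ s : ℝ, 0 < s →
      maxRe E (fun x => |u x| + |v x|) s ≤ maxRe E u s + maxRe E v s :=
  stmt1_general E hEfin u v hu hv
end

section
/- (Hardy–Littlewood inequality) For all measurable functions u, v on a Lebesgue measurable set E ⊆ ℝⁿ of finite measure, ∫_E |u(x) v(x)| dx ≤ ∫₀^{|E|} u*(s) v*(s) ds. -/
open MeasureTheory Set
open scoped ENNReal

/-!
By the layer cake formula applied twice, `∫ |u v|` is the integral over `t, s > 0` of
`|{|u| > t} ∩ {|v| > s}|`, and likewise `∫₀^{|E|} u* v*` is the integral of the measure of the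
corresponding joint superlevel set of `u*` and `v*` in `(0, |E|)`. Since `u*` is decreasing, its
superlevel set `{u* > t}` in `(0, |E|)` is the interval `(0, |{|u| > t}|)`; so the joint superlevel
set of `u*, v*` has measure `min (|{|u| > t}|, |{|v| > s}|)`, which dominates
`|{|u| > t} ∩ {|v| > s}|`.
-/

namespace MeasureTheory

variable {α : Type*} [MeasurableSpace α]

theorem lintegral_ofReal_mul_eq_lintegral_lintegral_measure_inter (μ : Measure α) {f g : α → ℝ}
    (hf0 : 0 ≤ᵐ[μ] f) (hg0 : 0 ≤ᵐ[μ] g) (hf : AEMeasurable f μ) (hg : AEMeasurable g μ) :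
    ∫⁻ x, ENNReal.ofReal (f x) * ENNReal.ofReal (g x) ∂μ =
      ∫⁻ t in Ioi 0, ∫⁻ s in Ioi 0, μ ({x | t < f x} ∩ {x | s < g x}) := by
  have hac := withDensity_absolutelyContinuous μ fun x => ENNReal.ofReal (g x)
  have hdensity : ∫⁻ x, ENNReal.ofReal (f x) * ENNReal.ofReal (g x) ∂μ
      = ∫⁻ x, ENNReal.ofReal (f x) ∂μ.withDensity fun x => ENNReal.ofReal (g x) := by
    simp_rw [mul_comm (ENNReal.ofReal (f _))]
    exact (lintegral_withDensity_eq_lintegral_mul₀ hg.ennreal_ofReal hf.ennreal_ofReal).symm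
  rw [hdensity, lintegral_eq_lintegral_meas_lt _ (hac.ae_le hf0) (hf.mono_ac hac)]
  refine setLIntegral_congr_fun measurableSet_Ioi fun t _ => ?_
  have hft : NullMeasurableSet {x | t < f x} μ := nullMeasurableSet_lt aemeasurable_const hf
  rw [withDensity_apply₀ _ hft,
    lintegral_eq_lintegral_meas_lt _ (ae_restrict_of_ae hg0) hg.restrict]
  refine setLIntegral_congr_fun measurableSet_Ioi fun s _ => ?_
  rw [Measure.restrict_apply₀' hft, inter_comm]

theorem exists_lt_lt_measure_setOf_lt (μ : Measure α) {g : α → ℝ} {t : ℝ} {c : ℝ≥0∞}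
    (hc : c < μ {x | t < g x}) : ∃ t' > t, c < μ {x | t' < g x} := by
  let A : ℕ → Set α := fun k => {x | t + 1 / (k + 1) < g x}
  have hA : Monotone A := fun j k hjk x (hx : t + 1 / (j + 1) < g x) =>
    show t + 1 / (k + 1) < g x from lt_of_le_of_lt (by gcongr) hx
  have hUnion : ⋃ k, A k = {x | t < g x} := by
    ext x
    simp only [A, mem_iUnion]
    refine ⟨fun ⟨k, hk⟩ =>
      (le_add_of_nonneg_right (by positivity : (0 : ℝ) ≤ 1 / (k + 1))).trans_lt hk,
      fun (hx : t < g x) => ?_⟩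
    obtain ⟨k, hk⟩ := exists_nat_one_div_lt (sub_pos.2 hx)
    exact ⟨k, show t + 1 / ((k : ℝ) + 1) < g x by linarith⟩
  have hlim := tendsto_measure_iUnion_atTop (μ := μ) hA
  rw [hUnion] at hlim
  obtain ⟨k, hk⟩ := (hlim.eventually_const_lt hc).exists
  exact ⟨t + 1 / (k + 1), lt_add_of_pos_right t (by positivity), hk⟩

theorem exists_nat_measure_setOf_lt_le (μ : Measure α) [IsFiniteMeasure μ] {g : α → ℝ}
    (hg : AEMeasurable g μ) {c : ℝ≥0∞} (hc : 0 < c) : ∃ t : ℕ, μ {x | t < g x} ≤ c := by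
  have hInter : ⋂ k : ℕ, {x | (k : ℝ) < g x} = ∅ := by
    ext x
    simpa using exists_nat_ge (g x)
  have hlim := tendsto_measure_iInter_atTop (μ := μ)
    (fun k : ℕ => nullMeasurableSet_lt aemeasurable_const hg)
    (fun j k hjk x (hx : (k : ℝ) < g x) => show (j : ℝ) < g x from
      lt_of_le_of_lt (by exact_mod_cast hjk) hx) ⟨0, measure_ne_top μ _⟩
  rw [hInter, measure_empty] at hlim
  obtain ⟨k, hk⟩ := (hlim.eventually_lt_const hc).exists
  exact ⟨k, hk.le⟩

noncomputable def decreasingRearrangement (μ : Measure α) (f : α → ℝ) (s : ℝ) : ℝ :=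
  sInf {t : ℝ | 0 ≤ t ∧ μ {x | t < |f x|} ≤ ENNReal.ofReal s}

section DecreasingRearrangement

variable {μ : Measure α} {f : α → ℝ}

theorem decreasingRearrangement_nonneg (μ : Measure α) (f : α → ℝ) (s : ℝ) :
    0 ≤ decreasingRearrangement μ f s :=
  Real.sInf_nonneg fun _ ht => ht.1

theorem nonempty_setOf_measure_setOf_lt_abs_le [IsFiniteMeasure μ] (hf : AEMeasurable f μ)
    {s : ℝ} (hs : 0 < s) : {t : ℝ | 0 ≤ t ∧ μ {x | t < |f x|} ≤ ENNReal.ofReal s}.Nonempty :=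
  let ⟨k, hk⟩ := exists_nat_measure_setOf_lt_le μ hf.abs (ENNReal.ofReal_pos.2 hs)
  ⟨k, k.cast_nonneg, hk⟩

theorem antitoneOn_decreasingRearrangement [IsFiniteMeasure μ] (hf : AEMeasurable f μ) :
    AntitoneOn (decreasingRearrangement μ f) (Ioi 0) := fun _ ha _ _ hab =>
  csInf_le_csInf ⟨0, fun _ ht => ht.1⟩ (nonempty_setOf_measure_setOf_lt_abs_le hf ha)
    fun _ ht => ⟨ht.1, ht.2.trans (ENNReal.ofReal_le_ofReal hab)⟩

theorem lt_decreasingRearrangement_iff [IsFiniteMeasure μ] (hf : AEMeasurable f μ) {s t : ℝ}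
    (hs : 0 < s) (ht : 0 ≤ t) :
    t < decreasingRearrangement μ f s ↔ ENNReal.ofReal s < μ {x | t < |f x|} := by
  constructor
  · intro h
    by_contra! hle
    exact h.not_ge (csInf_le ⟨0, fun _ ht => ht.1⟩ ⟨ht, hle⟩)
  · intro h
    obtain ⟨t', htt', ht'⟩ := exists_lt_lt_measure_setOf_lt μ h
    refine htt'.trans_le (le_csInf (nonempty_setOf_measure_setOf_lt_abs_le hf hs) fun a ha => ?_)
    by_contra! hat
    have hmono : μ {x | t' < |f x|} ≤ μ {x | a < |f x|} :=
      measure_mono fun x (hx : t' < |f x|) => hat.trans hx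
    exact (ht'.trans_le (hmono.trans ha.2)).false

theorem setOf_lt_decreasingRearrangement_inter_Ioo [IsFiniteMeasure μ] (hf : AEMeasurable f μ)
    {t : ℝ} (ht : 0 ≤ t) :
    {s | t < decreasingRearrangement μ f s} ∩ Ioo 0 (μ univ).toReal =
      Ioo 0 (μ {x | t < |f x|}).toReal := by
  ext s
  simp only [mem_inter_iff, mem_ofPred_eq, mem_Ioo]
  constructor
  · rintro ⟨h, hs, -⟩
    exact ⟨hs, (ENNReal.ofReal_lt_iff_lt_toReal hs.le (measure_ne_top _ _)).1
      ((lt_decreasingRearrangement_iff hf hs ht).1 h)⟩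
  · rintro ⟨hs, hst⟩
    exact ⟨(lt_decreasingRearrangement_iff hf hs ht).2
      ((ENNReal.ofReal_lt_iff_lt_toReal hs.le (measure_ne_top _ _)).2 hst), hs,
      hst.trans_le (ENNReal.toReal_mono (measure_ne_top _ _) (measure_mono (subset_univ _)))⟩

theorem measure_inter_le_volume_setOf_lt_decreasingRearrangement [IsFiniteMeasure μ]
    {g : α → ℝ} (hf : AEMeasurable f μ) (hg : AEMeasurable g μ) {t s : ℝ} (ht : 0 ≤ t)
    (hs : 0 ≤ s) :
    μ ({x | t < |f x|} ∩ {x | s < |g x|}) ≤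
      volume ({r | t < decreasingRearrangement μ f r} ∩ {r | s < decreasingRearrangement μ g r} ∩
        Ioo 0 (μ univ).toReal) := by
  rw [inter_inter_distrib_right, setOf_lt_decreasingRearrangement_inter_Ioo hf ht,
    setOf_lt_decreasingRearrangement_inter_Ioo hg hs, Ioo_inter_Ioo, Real.volume_Ioo, max_self,
    sub_zero, ENNReal.ofReal_min, ENNReal.ofReal_toReal (measure_ne_top _ _),
    ENNReal.ofReal_toReal (measure_ne_top _ _)]
  exact le_min (measure_mono inter_subset_left) (measure_mono inter_subset_right)

end DecreasingRearrangement

theorem lintegral_abs_mul_le_lintegral_decreasingRearrangement_mul (μ : Measure α)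
    [IsFiniteMeasure μ] {f g : α → ℝ} (hf : AEMeasurable f μ) (hg : AEMeasurable g μ) :
    ∫⁻ x, ENNReal.ofReal |f x * g x| ∂μ ≤
      ∫⁻ s in Ioo 0 (μ univ).toReal,
        ENNReal.ofReal (decreasingRearrangement μ f s * decreasingRearrangement μ g s) := by
  have hmeas {h : α → ℝ} (hh : AEMeasurable h μ) :
      AEMeasurable (decreasingRearrangement μ h) (volume.restrict (Ioo 0 (μ univ).toReal)) :=
    aemeasurable_restrict_of_antitoneOn measurableSet_Ioo
      ((antitoneOn_decreasingRearrangement hh).mono Ioo_subset_Ioi_self)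
  simp_rw [abs_mul, ENNReal.ofReal_mul (abs_nonneg _),
    ENNReal.ofReal_mul (decreasingRearrangement_nonneg _ _ _)]
  rw [lintegral_ofReal_mul_eq_lintegral_lintegral_measure_inter μ
      (ae_of_all _ fun _ => abs_nonneg _) (ae_of_all _ fun _ => abs_nonneg _) hf.abs hg.abs,
    lintegral_ofReal_mul_eq_lintegral_lintegral_measure_inter _
      (ae_of_all _ (decreasingRearrangement_nonneg μ f))
      (ae_of_all _ (decreasingRearrangement_nonneg μ g)) (hmeas hf) (hmeas hg)]
  refine setLIntegral_mono' measurableSet_Ioi fun t ht =>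
    setLIntegral_mono' measurableSet_Ioi fun s hs => ?_
  rw [Measure.restrict_apply' measurableSet_Ioo]
  exact measure_inter_le_volume_setOf_lt_decreasingRearrangement hf hg (le_of_lt ht) (le_of_lt hs)

end MeasureTheory

theorem decRe_eq_decreasingRearrangement {n : ℕ} {E : Set (Fin n → ℝ)} (hE : MeasurableSet E)
    (u : (Fin n → ℝ) → ℝ) : decRe E u = decreasingRearrangement (volume.restrict E) u := by
  funext s
  simp only [decRe, decreasingRearrangement, Measure.restrict_apply' hE, inter_comm _ E]
  rfl

/-- Hardy–Littlewood inequality: `∫_E |u v| ≤ ∫₀^{|E|} u* v*`. -/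
theorem stmt2 {n : ℕ} (E : Set (Fin n → ℝ)) (hE : MeasurableSet E)
    (hEfin : volume E < ⊤) (u v : (Fin n → ℝ) → ℝ)
    (hu : Measurable u) (hv : Measurable v) :
    ∫⁻ x in E, ENNReal.ofReal |u x * v x| ≤
      ∫⁻ s in Set.Ioo (0 : ℝ) (volume E).toReal,
        ENNReal.ofReal (decRe E u s * decRe E v s) := by
  have : IsFiniteMeasure (volume.restrict E) := isFiniteMeasure_restrict.2 hEfin.ne
  simpa only [decRe_eq_decreasingRearrangement hE, Measure.restrict_apply_univ] using
    lintegral_abs_mul_le_lintegral_decreasingRearrangement_mul (volume.restrict E)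
      hu.aemeasurable hv.aemeasurable
end

section
/- Let ℓ(s) = 1 + |log s| and ℓℓ(s) = 1 + log ℓ(s). For q ∈ [1,∞], α > 1/q', β ∈ ℝ, one has ‖s^{-1/q'} ℓ(s)^{-α} ℓℓ(s)^{-β}‖_{L^{q'}(0,r)} ≈ ℓ(r)^{1/q' - α} ℓℓ(r)^{-β} near 0, with constants independent of r. -/
open MeasureTheory Set
open scoped ENNReal

noncomputable def ell (s : ℝ) : ℝ := 1 + |Real.log s|
noncomputable def ellell (s : ℝ) : ℝ := 1 + Real.log (ell s)

/-!
Substituting `s = exp (1 - t)` turns `ℓ(s)` into `t` and `ds / s` into `dt`, so for `q' < ∞`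
the `q'`-th power of the norm is the tail `∫_{ℓ(r)}^∞ t^{-a} (1 + log t)^{-b} dt` with
`a = α q' > 1`, `b = β q'`. As `1 + log t` grows more slowly than any power of `t / L`, this tail
is at most a constant times `L^{1-a} (1 + log L)^{-b}` for `L = ℓ(r)`, while the piece over
`[L, 2L]` alone gives the matching lower bound. For `q' = ∞` the same two facts control the
supremum of `t^{-α} (1 + log t)^{-β}` over `t > ℓ(r)`.
-/

open Real

lemma one_le_ell (s : ℝ) : 1 ≤ ell s := le_add_of_nonneg_right (abs_nonneg _)

lemma ell_pos (s : ℝ) : 0 < ell s := one_pos.trans_le (one_le_ell s)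

lemma ell_of_le_one {s : ℝ} (hs : 0 < s) (hs1 : s ≤ 1) : ell s = 1 - log s := by
  rw [ell, abs_of_nonpos (log_nonpos hs.le hs1)]; ring

lemma ell_le_ell {s t : ℝ} (hs : 0 < s) (hst : s ≤ t) (ht : t ≤ 1) : ell t ≤ ell s := by
  rw [ell_of_le_one hs (hst.trans ht), ell_of_le_one (hs.trans_le hst) ht]
  linarith [log_le_log hs hst]

lemma ell_exp_one_sub {t : ℝ} (ht : 1 ≤ t) : ell (exp (1 - t)) = t := by
  rw [ell, log_exp, abs_of_nonpos (by linarith)]; ring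

lemma one_add_log_pos {t : ℝ} (ht : 1 ≤ t) : 0 < 1 + log t := by
  linarith [log_nonneg ht]

lemma one_add_log_le_rpow {δ x : ℝ} (hδ : 0 < δ) (hx : 1 ≤ x) :
    1 + log x ≤ (1 + 1 / δ) * x ^ δ := by
  have hlog : log x ≤ x ^ δ / δ := log_le_rpow_div (by linarith) hδ
  have hpow : 1 ≤ x ^ δ := one_le_rpow hx hδ.le
  calc 1 + log x ≤ x ^ δ + x ^ δ / δ := by linarith
    _ = (1 + 1 / δ) * x ^ δ := by ring

lemma one_add_log_mul_le {x y : ℝ} (hx : 1 ≤ x) (hy : 1 ≤ y) :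
    1 + log (x * y) ≤ (1 + log x) * (1 + log y) := by
  rw [log_mul (by positivity) (by positivity)]
  nlinarith [log_nonneg hx, log_nonneg hy]

lemma one_add_log_rpow_neg_le (b : ℝ) {ε : ℝ} (hε : 0 < ε) :
    ∃ K > 0, ∀ L t : ℝ, 1 ≤ L → L ≤ t →
      (1 + log t) ^ (-b) ≤ K * (t / L) ^ ε * (1 + log L) ^ (-b) := by
  rcases le_or_gt 0 b with hb | hb
  · refine ⟨1, one_pos, fun L t hL hLt => ?_⟩
    have hdecay : (1 + log t) ^ (-b) ≤ (1 + log L) ^ (-b) :=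
      rpow_le_rpow_of_nonpos (one_add_log_pos hL)
        (by linarith [log_le_log (by linarith) hLt]) (by linarith)
    have hratio : 1 ≤ (t / L) ^ ε :=
      one_le_rpow ((one_le_div (by linarith)).2 hLt) hε.le
    nlinarith [rpow_nonneg (one_add_log_pos hL).le (-b)]
  · set δ := ε / -b
    have hδ : 0 < δ := div_pos hε (by linarith)
    refine ⟨(1 + 1 / δ) ^ (-b), by positivity, fun L t hL hLt => ?_⟩
    have hL0 : 0 < L := by linarith
    have hu : 1 ≤ t / L := (one_le_div hL0).2 hLt
    have hsplit : 1 + log t ≤ (1 + log L) * ((1 + 1 / δ) * (t / L) ^ δ) :=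
      calc 1 + log t = 1 + log (L * (t / L)) := by rw [mul_div_cancel₀ t hL0.ne']
        _ ≤ (1 + log L) * (1 + log (t / L)) := one_add_log_mul_le hL hu
        _ ≤ (1 + log L) * ((1 + 1 / δ) * (t / L) ^ δ) :=
          mul_le_mul_of_nonneg_left (one_add_log_le_rpow hδ hu) (one_add_log_pos hL).le
    calc (1 + log t) ^ (-b)
        ≤ ((1 + log L) * ((1 + 1 / δ) * (t / L) ^ δ)) ^ (-b) :=
          rpow_le_rpow (one_add_log_pos (hL.trans hLt)).le hsplit (by linarith)
      _ = (1 + 1 / δ) ^ (-b) * (t / L) ^ ε * (1 + log L) ^ (-b) := by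
          rw [mul_rpow (one_add_log_pos hL).le (by positivity),
            mul_rpow (by positivity) (by positivity), ← rpow_mul (by positivity),
            div_mul_cancel₀ ε (by linarith : -b ≠ 0)]
          ring

noncomputable def logWeight (a b t : ℝ) : ℝ := t ^ (-a) * (1 + log t) ^ (-b)

lemma logWeight_nonneg (a b : ℝ) {t : ℝ} (ht : 1 ≤ t) : 0 ≤ logWeight a b t :=
  mul_nonneg (rpow_nonneg (by linarith) _) (rpow_nonneg (one_add_log_pos ht).le _)

lemma logWeight_mul_self (a b : ℝ) {t : ℝ} (ht : 0 < t) :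
    logWeight a b t * t = logWeight (a - 1) b t := by
  rw [logWeight, logWeight, mul_right_comm, ← rpow_add_one ht.ne']
  ring_nf

lemma two_rpow_neg_abs_mul_le {c M x : ℝ} (hM : 0 < M) (hMx : M ≤ x) (hx : x ≤ 2 * M) :
    2 ^ (-|c|) * M ^ (-c) ≤ x ^ (-c) := by
  rcases le_or_gt 0 c with hc | hc
  · rw [abs_of_nonneg hc, ← mul_rpow (by norm_num) hM.le]
    exact rpow_le_rpow_of_nonpos (hM.trans_le hMx) hx (by linarith)
  · calc 2 ^ (-|c|) * M ^ (-c) ≤ 1 * M ^ (-c) :=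
          mul_le_mul_of_nonneg_right (rpow_le_one_of_one_le_of_nonpos (by norm_num)
            (by linarith [abs_nonneg c])) (rpow_nonneg hM.le _)
      _ ≤ x ^ (-c) := by rw [one_mul]; exact rpow_le_rpow hM.le hMx (by linarith)

lemma logWeight_ge_of_le_two_mul (a b : ℝ) {L t : ℝ} (hL : 1 ≤ L) (hLt : L ≤ t)
    (ht : t ≤ 2 * L) : 2 ^ (-|a|) * 2 ^ (-|b|) * logWeight a b L ≤ logWeight a b t := by
  have hlogL := one_add_log_pos hL
  have hlog : 1 + log L ≤ 1 + log t := by linarith [log_le_log (by linarith) hLt]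
  have hlog2 : 1 + log t ≤ 2 * (1 + log L) := by
    have := log_le_log (by linarith) ht
    rw [log_mul two_ne_zero (by linarith)] at this
    linarith [log_two_lt_d9, log_nonneg hL]
  have hpow := two_rpow_neg_abs_mul_le (c := a) (by linarith) hLt ht
  have hlogpow := two_rpow_neg_abs_mul_le (c := b) hlogL hlog hlog2
  calc 2 ^ (-|a|) * 2 ^ (-|b|) * logWeight a b L
      = (2 ^ (-|a|) * L ^ (-a)) * (2 ^ (-|b|) * (1 + log L) ^ (-b)) := by
        rw [logWeight]; ring
    _ ≤ logWeight a b t :=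
      mul_le_mul hpow hlogpow (by positivity) (rpow_nonneg (by linarith) _)

lemma logWeight_le (a b : ℝ) {ε : ℝ} (hε : 0 < ε) :
    ∃ K > 0, ∀ L t : ℝ, 1 ≤ L → L ≤ t →
      logWeight a b t ≤ K * L ^ (-ε) * (1 + log L) ^ (-b) * t ^ (ε - a) := by
  obtain ⟨K, hK, hlog⟩ := one_add_log_rpow_neg_le b hε
  refine ⟨K, hK, fun L t hL hLt => ?_⟩
  have hL0 : 0 < L := by linarith
  have ht0 : 0 < t := hL0.trans_le hLt
  calc logWeight a b t ≤ t ^ (-a) * (K * (t / L) ^ ε * (1 + log L) ^ (-b)) :=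
        mul_le_mul_of_nonneg_left (hlog L t hL hLt) (rpow_nonneg ht0.le _)
    _ = K * L ^ (-ε) * (1 + log L) ^ (-b) * (t ^ (-a) * t ^ ε) := by
        rw [div_rpow ht0.le hL0.le, rpow_neg hL0.le]; ring
    _ = K * L ^ (-ε) * (1 + log L) ^ (-b) * t ^ (ε - a) := by
        rw [← rpow_add ht0, neg_add_eq_sub]

lemma logWeight_le_mul_logWeight (b : ℝ) {a : ℝ} (ha : 0 < a) :
    ∃ K > 0, ∀ L t : ℝ, 1 ≤ L → L ≤ t → logWeight a b t ≤ K * logWeight a b L := by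
  obtain ⟨K, hK, hle⟩ := logWeight_le a b ha
  refine ⟨K, hK, fun L t hL hLt => (hle L t hL hLt).trans_eq ?_⟩
  rw [sub_self, rpow_zero, logWeight]; ring

lemma lintegral_Ioi_logWeight_le (b : ℝ) {a : ℝ} (ha : 1 < a) :
    ∃ C > 0, ∀ L : ℝ, 1 ≤ L →
      ∫⁻ t in Ioi L, ENNReal.ofReal (logWeight a b t) ≤
        ENNReal.ofReal (C * logWeight (a - 1) b L) := by
  set ε := (a - 1) / 2 with hε_def
  have hε : 0 < ε := by positivity
  have hexp : ε - a < -1 := by linarith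
  obtain ⟨K, hK, hle⟩ := logWeight_le a b hε
  refine ⟨K / (a - 1 - ε), div_pos hK (by linarith), fun L hL => ?_⟩
  have hL0 : 0 < L := by linarith
  set M := K * L ^ (-ε) * (1 + log L) ^ (-b)
  have hM : 0 ≤ M := by have := one_add_log_pos hL; positivity
  calc ∫⁻ t in Ioi L, ENNReal.ofReal (logWeight a b t)
      ≤ ∫⁻ t in Ioi L, ENNReal.ofReal (M * t ^ (ε - a)) :=
        setLIntegral_mono' measurableSet_Ioi fun t ht =>
          ENNReal.ofReal_le_ofReal (hle L t hL (le_of_lt ht))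
    _ = ENNReal.ofReal (∫ t in Ioi L, M * t ^ (ε - a)) := by
        refine (ofReal_integral_eq_lintegral_ofReal
          ((integrableOn_Ioi_rpow_of_lt hexp hL0).const_mul M) ?_).symm
        filter_upwards [ae_restrict_mem measurableSet_Ioi] with t ht
        exact mul_nonneg hM (rpow_nonneg (hL0.trans ht).le _)
    _ = ENNReal.ofReal (K / (a - 1 - ε) * logWeight (a - 1) b L) := by
        rw [integral_const_mul, integral_Ioi_rpow_of_lt hexp hL0]
        have hpow : L ^ (-ε) * L ^ (ε - a + 1) = L ^ (-(a - 1)) := by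
          rw [← rpow_add hL0]; ring_nf
        have hne : ε - a + 1 ≠ 0 := by linarith
        have hne' : a - 1 - ε ≠ 0 := by linarith
        congr 1
        calc M * (-L ^ (ε - a + 1) / (ε - a + 1))
            = K / (a - 1 - ε) * ((L ^ (-ε) * L ^ (ε - a + 1)) * (1 + log L) ^ (-b)) := by
              field_simp; ring
          _ = K / (a - 1 - ε) * logWeight (a - 1) b L := by rw [hpow, logWeight]

lemma le_lintegral_Ioi_logWeight (a b : ℝ) {L : ℝ} (hL : 1 ≤ L) :
    ENNReal.ofReal (2 ^ (-|a|) * 2 ^ (-|b|) * logWeight (a - 1) b L) ≤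
      ∫⁻ t in Ioi L, ENNReal.ofReal (logWeight a b t) := by
  have hL0 : 0 < L := by linarith
  have hm : 0 ≤ 2 ^ (-|a|) * 2 ^ (-|b|) * logWeight a b L :=
    mul_nonneg (by positivity) (logWeight_nonneg a b hL)
  calc ENNReal.ofReal (2 ^ (-|a|) * 2 ^ (-|b|) * logWeight (a - 1) b L)
      = ∫⁻ _ in Ioo L (2 * L), ENNReal.ofReal (2 ^ (-|a|) * 2 ^ (-|b|) * logWeight a b L) := by
        rw [setLIntegral_const, volume_Ioo, two_mul, add_sub_cancel_right,
          ← ENNReal.ofReal_mul hm, mul_assoc _ (logWeight a b L), logWeight_mul_self a b hL0]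
    _ ≤ ∫⁻ t in Ioo L (2 * L), ENNReal.ofReal (logWeight a b t) :=
        setLIntegral_mono' measurableSet_Ioo fun t ht => ENNReal.ofReal_le_ofReal
          (logWeight_ge_of_le_two_mul a b hL ht.1.le ht.2.le)
    _ ≤ ∫⁻ t in Ioi L, ENNReal.ofReal (logWeight a b t) :=
        lintegral_mono_set Ioo_subset_Ioi_self

/-- The substitution `s = exp (1 - t)`, under which `ell s = t` and `ds / s = -dt`. -/
lemma lintegral_Ioo_inv_mul_comp_ell {r : ℝ} (hr : 0 < r) (hr1 : r ≤ 1) (g : ℝ → ℝ≥0∞) :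
    ∫⁻ s in Ioo 0 r, ENNReal.ofReal s⁻¹ * g (ell s) = ∫⁻ t in Ioi (ell r), g t := by
  have himage : (fun t => exp (1 - t)) '' Ioi (ell r) = Ioo 0 r := by
    ext s
    simp only [mem_image, mem_Ioi, mem_Ioo, ell_of_le_one hr hr1]
    constructor
    · rintro ⟨t, ht, rfl⟩
      refine ⟨exp_pos _, ?_⟩
      calc exp (1 - t) < exp (log r) := exp_lt_exp.2 (by linarith)
        _ = r := exp_log hr
    · rintro ⟨hs, hsr⟩
      exact ⟨1 - log s, by linarith [log_lt_log hs hsr], by rw [sub_sub_cancel, exp_log hs]⟩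
  have hderiv : ∀ t ∈ Ioi (ell r),
      HasDerivWithinAt (fun t => exp (1 - t)) (-exp (1 - t)) (Ioi (ell r)) t := fun t _ => by
    simpa using ((hasDerivAt_id t).const_sub 1).exp.hasDerivWithinAt
  have hinj : InjOn (fun t => exp (1 - t)) (Ioi (ell r)) := fun t _ u _ h => by
    simpa using h
  rw [← himage, lintegral_image_eq_lintegral_abs_deriv_mul measurableSet_Ioi hderiv hinj]
  refine setLIntegral_congr_fun measurableSet_Ioi fun t ht => ?_
  have ht1 : 1 ≤ t := (one_le_ell r).trans (le_of_lt ht)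
  rw [abs_neg, abs_of_pos (exp_pos _), ← mul_assoc, ← ENNReal.ofReal_mul (exp_pos _).le,
    mul_inv_cancel₀ (exp_pos _).ne', ENNReal.ofReal_one, one_mul, ell_exp_one_sub ht1]

lemma logWeight_rpow (a b x : ℝ) {t : ℝ} (ht : 1 ≤ t) :
    logWeight a b t ^ x = logWeight (a * x) (b * x) t := by
  rw [logWeight, logWeight, mul_rpow (rpow_nonneg (by linarith) _)
    (rpow_nonneg (one_add_log_pos ht).le _), ← rpow_mul (by linarith),
    ← rpow_mul (one_add_log_pos ht).le, neg_mul, neg_mul]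

lemma eLpNorm_weight_eq {p : ℝ≥0∞} (hp0 : p ≠ 0) (hp : p ≠ ⊤) (α β : ℝ) {r : ℝ} (hr : 0 < r)
    (hr1 : r ≤ 1) :
    eLpNorm (fun s : ℝ => s ^ (-(1 / p.toReal)) * ell s ^ (-α) * ellell s ^ (-β)) p
        (volume.restrict (Ioo 0 r)) =
      (∫⁻ t in Ioi (ell r), ENNReal.ofReal (logWeight (α * p.toReal) (β * p.toReal) t)) ^
        (1 / p.toReal) := by
  have hp' : 0 < p.toReal := ENNReal.toReal_pos hp0 hp
  rw [eLpNorm_eq_lintegral_rpow_enorm_toReal hp0 hp, ← lintegral_Ioo_inv_mul_comp_ell hr hr1]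
  congr 1
  refine setLIntegral_congr_fun measurableSet_Ioo fun s hs => ?_
  have hs0 : 0 < s := hs.1
  have hW := logWeight_nonneg α β (one_le_ell s)
  have hpow : 0 ≤ s ^ (-(1 / p.toReal)) := rpow_nonneg hs0.le _
  rw [show s ^ (-(1 / p.toReal)) * ell s ^ (-α) * ellell s ^ (-β) =
      s ^ (-(1 / p.toReal)) * logWeight α β (ell s) by rw [logWeight, ellell, mul_assoc],
    ← ofReal_norm, norm_of_nonneg (mul_nonneg hpow hW),
    ENNReal.ofReal_rpow_of_nonneg (mul_nonneg hpow hW) hp'.le, mul_rpow hpow hW,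
    ← rpow_mul hs0.le, logWeight_rpow α β _ (one_le_ell s),
    ENNReal.ofReal_mul (rpow_nonneg hs0.le _), neg_mul, one_div_mul_cancel hp'.ne',
    rpow_neg_one]

lemma eLpNorm_weight_finite {p : ℝ≥0∞} (hp0 : p ≠ 0) (hp : p ≠ ⊤) (β : ℝ) {α : ℝ}
    (hα : 1 / p.toReal < α) :
    ∃ c C r₀ : ℝ, 0 < c ∧ 0 < C ∧ 0 < r₀ ∧
      ∀ r ∈ Ioo (0 : ℝ) r₀,
        ENNReal.ofReal (c * (ell r ^ (1 / p.toReal - α) * ellell r ^ (-β))) ≤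
            eLpNorm (fun s : ℝ => s ^ (-(1 / p.toReal)) * ell s ^ (-α) * ellell s ^ (-β))
              p (volume.restrict (Ioo (0 : ℝ) r)) ∧
          eLpNorm (fun s : ℝ => s ^ (-(1 / p.toReal)) * ell s ^ (-α) * ellell s ^ (-β))
              p (volume.restrict (Ioo (0 : ℝ) r)) ≤
            ENNReal.ofReal (C * (ell r ^ (1 / p.toReal - α) * ellell r ^ (-β))) := by
  have hp' : 0 < p.toReal := ENNReal.toReal_pos hp0 hp
  have ha : 1 < α * p.toReal := by rwa [div_lt_iff₀ hp'] at hα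
  obtain ⟨C₀, hC₀, hupper⟩ := lintegral_Ioi_logWeight_le (β * p.toReal) ha
  have hc₀ : 0 < (2 : ℝ) ^ (-|α * p.toReal|) * 2 ^ (-|β * p.toReal|) := by positivity
  refine ⟨_, _, 1, rpow_pos_of_pos hc₀ (1 / p.toReal), rpow_pos_of_pos hC₀ (1 / p.toReal),
    one_pos, fun r hr => ?_⟩
  have hL := one_le_ell r
  have hrescale : ∀ k : ℝ, 0 ≤ k →
      ENNReal.ofReal (k ^ (1 / p.toReal) * (ell r ^ (1 / p.toReal - α) * ellell r ^ (-β))) =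
        ENNReal.ofReal (k * logWeight (α * p.toReal - 1) (β * p.toReal) (ell r)) ^
          (1 / p.toReal) := fun k hk => by
    have hW := logWeight_nonneg (α * p.toReal - 1) (β * p.toReal) hL
    rw [ENNReal.ofReal_rpow_of_nonneg (mul_nonneg hk hW) (by positivity), mul_rpow hk hW,
      logWeight_rpow _ _ _ hL, logWeight, ellell]
    congr 4 <;> field_simp
    ring
  rw [eLpNorm_weight_eq hp0 hp α β hr.1 hr.2.le, hrescale _ hc₀.le, hrescale _ hC₀.le]
  exact ⟨ENNReal.rpow_le_rpow (le_lintegral_Ioi_logWeight _ _ hL) (by positivity),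
    ENNReal.rpow_le_rpow (hupper _ hL) (by positivity)⟩

lemma ofReal_le_eLpNorm_top_restrict {X : Type*} [MeasurableSpace X] {μ : Measure X}
    {f : X → ℝ} {s t : Set X} (hts : t ⊆ s) (ht : MeasurableSet t) (hμt : μ t ≠ 0) {m : ℝ}
    (hm : ∀ x ∈ t, m ≤ f x) : ENNReal.ofReal m ≤ eLpNorm f ⊤ (μ.restrict s) := by
  have := ae_restrict_neBot.2 hμt
  obtain ⟨x, hx, hxt⟩ :=
    ((enorm_ae_le_eLpNormEssSup f (μ.restrict t)).and (ae_restrict_mem ht)).exists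
  calc ENNReal.ofReal m ≤ ‖f x‖ₑ := by
        rw [← ofReal_norm]; exact ENNReal.ofReal_le_ofReal ((hm x hxt).trans (le_abs_self _))
    _ ≤ eLpNorm f ⊤ (μ.restrict t) := by rwa [eLpNorm_exponent_top]
    _ ≤ eLpNorm f ⊤ (μ.restrict s) := eLpNorm_mono_measure f (Measure.restrict_mono hts le_rfl)

lemma ell_half_le {r : ℝ} (hr : 0 < r) (hr1 : r ≤ 1) : ell (r / 2) ≤ 2 * ell r := by
  rw [ell_of_le_one (by positivity) (by linarith), ell_of_le_one hr hr1,
    log_div hr.ne' two_ne_zero]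
  linarith [log_two_lt_d9, log_nonpos hr.le hr1]

lemma eLpNorm_weight_top (β : ℝ) {α : ℝ} (hα : 0 < α) :
    ∃ c C r₀ : ℝ, 0 < c ∧ 0 < C ∧ 0 < r₀ ∧
      ∀ r ∈ Ioo (0 : ℝ) r₀,
        ENNReal.ofReal (c * (ell r ^ (-α) * ellell r ^ (-β))) ≤
            eLpNorm (fun s : ℝ => ell s ^ (-α) * ellell s ^ (-β)) ⊤
              (volume.restrict (Ioo (0 : ℝ) r)) ∧
          eLpNorm (fun s : ℝ => ell s ^ (-α) * ellell s ^ (-β)) ⊤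
              (volume.restrict (Ioo (0 : ℝ) r)) ≤
            ENNReal.ofReal (C * (ell r ^ (-α) * ellell r ^ (-β))) := by
  obtain ⟨K, hK, hle⟩ := logWeight_le_mul_logWeight β hα
  refine ⟨2 ^ (-|α|) * 2 ^ (-|β|), K, 1, by positivity, hK, one_pos, fun r ⟨hr, hr1⟩ => ?_⟩
  change ENNReal.ofReal (_ * logWeight α β (ell r)) ≤
      eLpNorm (fun s => logWeight α β (ell s)) ⊤ _ ∧
    eLpNorm (fun s => logWeight α β (ell s)) ⊤ _ ≤ ENNReal.ofReal (K * logWeight α β (ell r))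
  constructor
  · refine ofReal_le_eLpNorm_top_restrict (Ioo_subset_Ioo_left (half_pos hr).le)
      measurableSet_Ioo (by simp [volume_Ioo, hr]) fun s ⟨hs, hsr⟩ => ?_
    have hs0 : 0 < s := (half_pos hr).trans hs
    exact logWeight_ge_of_le_two_mul α β (one_le_ell r) (ell_le_ell hs0 hsr.le hr1.le)
      ((ell_le_ell (half_pos hr) hs.le (hsr.trans hr1).le).trans (ell_half_le hr hr1.le))
  · rw [eLpNorm_exponent_top]
    refine eLpNormEssSup_le_of_ae_bound ((ae_restrict_iff' measurableSet_Ioo).2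
      (Filter.Eventually.of_forall fun s ⟨hs, hsr⟩ => ?_))
    rw [norm_of_nonneg (logWeight_nonneg α β (one_le_ell s))]
    exact hle _ _ (one_le_ell r) (ell_le_ell hs hsr.le hr1.le)

theorem stmt8_general (q q' : ℝ≥0∞) (hconj : 1 / q + 1 / q' = 1)
    (α β : ℝ) (hα : (1 / q').toReal < α) :
    ∃ c C r₀ : ℝ, 0 < c ∧ 0 < C ∧ 0 < r₀ ∧
      ∀ r ∈ Set.Ioo (0 : ℝ) r₀,
        ENNReal.ofReal (c * (ell r ^ ((1 / q').toReal - α) * ellell r ^ (-β))) ≤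
            eLpNorm (fun s : ℝ => s ^ (-(1 / q').toReal) * ell s ^ (-α) * ellell s ^ (-β))
              q' (volume.restrict (Set.Ioo (0 : ℝ) r)) ∧
          eLpNorm (fun s : ℝ => s ^ (-(1 / q').toReal) * ell s ^ (-α) * ellell s ^ (-β))
              q' (volume.restrict (Set.Ioo (0 : ℝ) r)) ≤
            ENNReal.ofReal (C * (ell r ^ ((1 / q').toReal - α) * ellell r ^ (-β))) := by
  have hq'0 : q' ≠ 0 := by
    rintro rfl
    simp at hconj
  rcases eq_or_ne q' ⊤ with rfl | hq'
  · simp only [ENNReal.div_top, ENNReal.toReal_zero, neg_zero, rpow_zero, one_mul,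
      zero_sub] at hα ⊢
    exact eLpNorm_weight_top β hα
  · rw [ENNReal.toReal_div, ENNReal.toReal_one] at hα ⊢
    exact eLpNorm_weight_finite hq'0 hq' β hα

/-- For `α > 1/q'`: `‖s^{-1/q'} ℓ(s)^{-α} ℓℓ(s)^{-β}‖_{L^{q'}(0,r)} ≈ ℓ(r)^{1/q'-α} ℓℓ(r)^{-β}`
near `0`, with constants independent of `r`. -/
theorem stmt8 (q q' : ℝ≥0∞) (hq : 1 ≤ q) (hconj : 1 / q + 1 / q' = 1)
    (α β : ℝ) (hα : (1 / q').toReal < α) :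
    ∃ c C r₀ : ℝ, 0 < c ∧ 0 < C ∧ 0 < r₀ ∧
      ∀ r ∈ Set.Ioo (0 : ℝ) r₀,
        ENNReal.ofReal (c * (ell r ^ ((1 / q').toReal - α) * ellell r ^ (-β))) ≤
            eLpNorm (fun s : ℝ => s ^ (-(1 / q').toReal) * ell s ^ (-α) * ellell s ^ (-β))
              q' (volume.restrict (Set.Ioo (0 : ℝ) r)) ∧
          eLpNorm (fun s : ℝ => s ^ (-(1 / q').toReal) * ell s ^ (-α) * ellell s ^ (-β))
              q' (volume.restrict (Set.Ioo (0 : ℝ) r)) ≤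
            ENNReal.ofReal (C * (ell r ^ ((1 / q').toReal - α) * ellell r ^ (-β))) :=
  stmt8_general q q' hconj α β hα
end

section
/- Let φ : (0,∞) → (0,∞) be an admissible function with inf φ = 0 and let Ω ⊆ ℝⁿ be a bounded domain. Then the Morrey type space M^{φ}(Ω) contains only the zero function (as an a.e. equivalence class). -/
/-!
By Lebesgue's differentiation theorem, `|u x|` is the limit of the averages of `|u|` over balls
shrinking to `x`. Admissibility forces the radii `r` with `φ r` small to be small, so
`inf φ = 0` yields radii `r_k → 0` with `φ (r_k) → 0`, and the Morrey bound gives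
`⨍_B |u| ≤ K φ (r_k)` for every ball `B ⊆ Ω` with `|B|^(1/n) = r_k`. Hence `|u x| = 0` at
almost every point of `Ω`.
-/

open MeasureTheory Set Filter Metric Module Topology

theorem exists_seq_tendsto_nhdsGT_zero_of_admissible {φ : ℝ → ℝ}
    (hφpos : ∀ r > 0, 0 < φ r)
    (hadm : ∀ a > (0 : ℝ), ∃ ε > (0 : ℝ), ∀ r, a ≤ r → ε ≤ φ r)
    (hinf : ∀ ε > (0 : ℝ), ∃ r > (0 : ℝ), φ r < ε) :
    ∃ r : ℕ → ℝ, Tendsto r atTop (𝓝[>] 0) ∧ Tendsto (φ ∘ r) atTop (𝓝 0) := by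
  have small (k : ℕ) : ∃ r : ℝ, 0 < r ∧ r < 1 / (k + 1) ∧ φ r < 1 / (k + 1) := by
    obtain ⟨ε, hε, hεφ⟩ := hadm (1 / (k + 1)) (by positivity)
    obtain ⟨r, hr, hrφ⟩ := hinf (min (1 / (k + 1)) ε) (lt_min (by positivity) hε)
    -- `φ ≥ ε` from `1 / (k + 1)` on, so a radius with `φ r < ε` lies below it
    refine ⟨r, hr, lt_of_not_ge fun h => ?_, hrφ.trans_le (min_le_left _ _)⟩
    exact (hεφ r h).not_gt (hrφ.trans_le (min_le_right _ _))
  choose r hr_pos hr_lt hφr_lt using small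
  refine ⟨r, tendsto_nhdsWithin_iff.mpr ⟨?_, .of_forall hr_pos⟩, ?_⟩
  · exact squeeze_zero (fun k => (hr_pos k).le) (fun k => (hr_lt k).le)
      tendsto_one_div_add_atTop_nhds_zero_nat
  · exact squeeze_zero (fun k => (hφpos _ (hr_pos k)).le) (fun k => (hφr_lt k).le)
      tendsto_one_div_add_atTop_nhds_zero_nat

theorem ae_eq_zero_of_average_abs_closedBall_le {α ι : Type*} [PseudoMetricSpace α]
    [MeasurableSpace α] [BorelSpace α] [SecondCountableTopology α] {μ : Measure α}
    [IsLocallyFiniteMeasure μ] [IsUnifLocDoublingMeasure μ] {u : α → ℝ}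
    (hu : LocallyIntegrable u μ) {l : Filter ι} [l.NeBot] {δ b : ι → ℝ}
    (hδ : Tendsto δ l (𝓝[>] 0)) (hb : Tendsto b l (𝓝 0)) {s : Set α} (hs : IsOpen s)
    (hbound : ∀ x k, 0 < δ k → closedBall x (δ k) ⊆ s →
      ⨍ y in closedBall x (δ k), |u y| ∂μ ≤ b k) :
    ∀ᵐ x ∂μ, x ∈ s → u x = 0 := by
  have hu_abs : LocallyIntegrable (fun x => |u x|) μ := fun x => (hu x).norm
  filter_upwards [IsUnifLocDoublingMeasure.ae_tendsto_average μ hu_abs 1] with x hx hxs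
  have hδ_pos : ∀ᶠ k in l, 0 < δ k := eventually_mem_of_tendsto_nhdsWithin hδ
  have hlim := hx (fun _ => x) δ hδ (hδ_pos.mono fun k hk => by simpa using hk.le)
  have hsub : ∀ᶠ k in l, closedBall x (δ k) ⊆ s :=
    (tendsto_nhds_of_tendsto_nhdsWithin hδ).eventually
      (eventually_closedBall_subset (hs.mem_nhds hxs))
  have : |u x| ≤ 0 := le_of_tendsto_of_tendsto hlim hb
    ((hδ_pos.and hsub).mono fun k hk => hbound x k hk.1 hk.2)
  exact abs_nonpos_iff.mp this

section AddHaar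

variable {E : Type*} [NormedAddCommGroup E] [NormedSpace ℝ E] [MeasurableSpace E]
  [BorelSpace E] [FiniteDimensional ℝ E] (μ : Measure E) [μ.IsAddHaarMeasure]

theorem addHaar_real_ball_rpow_inv_finrank [Nontrivial E] (x : E) {r : ℝ} (hr : 0 ≤ r) :
    μ.real (ball x r) ^ (finrank ℝ E : ℝ)⁻¹ =
      r * μ.real (ball 0 1) ^ (finrank ℝ E : ℝ)⁻¹ := by
  have hd : (finrank ℝ E : ℝ) ≠ 0 := Nat.cast_ne_zero.mpr finrank_pos.ne'
  rw [measureReal_def, Measure.addHaar_ball μ x hr, ENNReal.toReal_mul,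
    ENNReal.toReal_ofReal (by positivity), Real.mul_rpow (by positivity) ENNReal.toReal_nonneg,
    ← Real.rpow_natCast, ← Real.rpow_mul hr, mul_inv_cancel₀ hd, Real.rpow_one,
    measureReal_def]

theorem closedBall_ae_eq_ball (x : E) {r : ℝ} (hr : r ≠ 0) :
    closedBall x r =ᵐ[μ] ball x r := by
  rw [ae_eq_set, closedBall_sdiff_ball, sdiff_eq_empty.mpr ball_subset_closedBall]
  exact ⟨Measure.addHaar_sphere_of_ne_zero μ x hr, measure_empty⟩

variable {μ} in
theorem ae_restrict_eq_zero_of_average_abs_ball_le {ι : Type*} {Ω : Set E} (hΩ : IsOpen Ω)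
    {u : E → ℝ} (hu : LocallyIntegrableOn u Ω μ) {l : Filter ι} [l.NeBot] {δ b : ι → ℝ}
    (hδ : Tendsto δ l (𝓝[>] 0)) (hb : Tendsto b l (𝓝 0))
    (hbound : ∀ x k, 0 < δ k → ball x (δ k) ⊆ Ω →
      ⨍ y in ball x (δ k), |u y| ∂μ ≤ b k) :
    ∀ᵐ x ∂μ.restrict Ω, u x = 0 := by
  have local_vanishing : ∀ x ∈ Ω, ∃ ρ > 0, ∀ᵐ y ∂μ, y ∈ ball x ρ → u y = 0 := by
    intro x hx
    obtain ⟨ρ, hρ, hρΩ⟩ := nhds_basis_closedBall.mem_iff.mp (hΩ.mem_nhds hx)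
    have hint : Integrable ((ball x ρ).indicator u) μ :=
      ((hu.integrableOn_compact_subset hρΩ (isCompact_closedBall x ρ)).mono_set
        ball_subset_closedBall).integrable_indicator measurableSet_ball
    have hbound_ind : ∀ y k, 0 < δ k → closedBall y (δ k) ⊆ ball x ρ →
        ⨍ z in closedBall y (δ k), |(ball x ρ).indicator u z| ∂μ ≤ b k := by
      intro y k hk hyk
      calc ⨍ z in closedBall y (δ k), |(ball x ρ).indicator u z| ∂μ
          = ⨍ z in ball y (δ k), |u z| ∂μ := by
            rw [setAverage_congr (closedBall_ae_eq_ball μ y hk.ne')]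
            refine setAverage_congr_fun measurableSet_ball (.of_forall fun z hz => ?_)
            rw [indicator_of_mem (ball_subset_closedBall.trans hyk hz)]
        _ ≤ b k := hbound y k hk
            ((ball_subset_closedBall.trans hyk).trans (ball_subset_closedBall.trans hρΩ))
    refine ⟨ρ, hρ, ?_⟩
    filter_upwards [ae_eq_zero_of_average_abs_closedBall_le hint.locallyIntegrable hδ hb
      isOpen_ball hbound_ind] with y hy hyB
    simpa [indicator_of_mem hyB] using hy hyB
  rw [ae_restrict_iff' hΩ.measurableSet, ae_iff]
  refine measure_null_of_locally_null _ fun x hx => ?_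
  obtain ⟨ρ, hρ, hρu⟩ := local_vanishing x (Classical.not_imp.mp hx).1
  refine ⟨_, inter_mem_nhdsWithin _ (ball_mem_nhds x hρ), ?_⟩
  refine measure_mono_null (fun y hy => ?_) (ae_iff.mp hρu)
  exact fun h => hy.1 fun _ => h hy.2

end AddHaar

theorem stmt19_general (n : ℕ) (hn : 0 < n) (Ω : Set (EuclideanSpace ℝ (Fin n)))
    (hopen : IsOpen Ω)
    (φ : ℝ → ℝ) (hφpos : ∀ r > 0, 0 < φ r)
    -- φ is admissible
    (hadm : ∀ a > (0 : ℝ), ∃ ε > (0 : ℝ), ∀ r, a ≤ r → ε ≤ φ r)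
    -- inf φ = 0
    (hinf : ∀ ε > (0 : ℝ), ∃ r > (0 : ℝ), φ r < ε)
    (u : EuclideanSpace ℝ (Fin n) → ℝ)
    (hint : ∀ (x₀ : EuclideanSpace ℝ (Fin n)) (ρ : ℝ), 0 < ρ → Metric.ball x₀ ρ ⊆ Ω →
      IntegrableOn u (Metric.ball x₀ ρ))
    -- u has finite Morrey norm, bounded by K
    (K : ℝ)
    (hK : ∀ (x₀ : EuclideanSpace ℝ (Fin n)) (ρ : ℝ), 0 < ρ → Metric.ball x₀ ρ ⊆ Ω →
      (φ (((volume (Metric.ball x₀ ρ)).toReal) ^ ((n : ℝ)⁻¹)))⁻¹ *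
        ⨍ x in Metric.ball x₀ ρ, |u x| ≤ K) :
    ∀ᵐ x ∂(volume.restrict Ω), u x = 0 := by
  have : Nontrivial (EuclideanSpace ℝ (Fin n)) :=
    Module.nontrivial_of_finrank_pos (R := ℝ) (by rwa [finrank_euclideanSpace_fin])
  set c := volume.real (ball (0 : EuclideanSpace ℝ (Fin n)) 1) ^ (n : ℝ)⁻¹
  have hc : 0 < c := Real.rpow_pos_of_pos
    (ENNReal.toReal_pos (measure_ball_pos volume _ one_pos).ne' measure_ball_lt_top.ne) _
  have hvol (x : EuclideanSpace ℝ (Fin n)) {t : ℝ} (ht : 0 ≤ t) :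
      (volume (ball x t)).toReal ^ (n : ℝ)⁻¹ = t * c := by
    rw [← measureReal_def]
    simpa only [finrank_euclideanSpace_fin] using
      addHaar_real_ball_rpow_inv_finrank volume x ht
  obtain ⟨r, hr, hφr⟩ := exists_seq_tendsto_nhdsGT_zero_of_admissible hφpos hadm hinf
  have hu : LocallyIntegrableOn u Ω volume := fun x hx => by
    obtain ⟨ρ, hρ, hρΩ⟩ := Metric.isOpen_iff.mp hopen x hx
    exact ⟨ball x ρ, nhdsWithin_le_nhds (ball_mem_nhds x hρ), hint x ρ hρ hρΩ⟩
  refine ae_restrict_eq_zero_of_average_abs_ball_le hopen hu (δ := fun k => r k / c)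
    (b := fun k => φ (r k) * K) ?_ (by simpa using hφr.mul_const K) fun x k hk hsub => ?_
  · refine tendsto_nhdsWithin_iff.mpr ⟨?_, (eventually_mem_of_tendsto_nhdsWithin hr).mono
      fun k hk => div_pos hk hc⟩
    simpa using (tendsto_nhds_of_tendsto_nhdsWithin hr).div_const c
  have hrk : 0 < r k := (div_pos_iff_of_pos_right hc).mp hk
  have hmorrey := hK x _ hk hsub
  rwa [hvol x hk.le, div_mul_cancel₀ _ hc.ne', inv_mul_le_iff₀ (hφpos _ hrk)] at hmorrey

/-- If `φ` is an admissible function with `inf φ = 0`, then the Morrey type space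
`M^φ(Ω)` contains only the zero function: any `u` with finite Morrey norm
vanishes almost everywhere in `Ω`. -/
theorem stmt19 (n : ℕ) (hn : 0 < n) (Ω : Set (EuclideanSpace ℝ (Fin n)))
    (hopen : IsOpen Ω) (hbd : Bornology.IsBounded Ω) (hne : Ω.Nonempty)
    (φ : ℝ → ℝ) (hφpos : ∀ r > 0, 0 < φ r)
    -- φ is admissible
    (hadm : ∀ a > (0 : ℝ), ∃ ε > (0 : ℝ), ∀ r, a ≤ r → ε ≤ φ r)
    -- inf φ = 0
    (hinf : ∀ ε > (0 : ℝ), ∃ r > (0 : ℝ), φ r < ε)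
    (u : EuclideanSpace ℝ (Fin n) → ℝ)
    (hmeas : AEStronglyMeasurable u volume)
    (hint : ∀ (x₀ : EuclideanSpace ℝ (Fin n)) (ρ : ℝ), 0 < ρ → Metric.ball x₀ ρ ⊆ Ω →
      IntegrableOn u (Metric.ball x₀ ρ))
    -- u has finite Morrey norm, bounded by K
    (K : ℝ)
    (hK : ∀ (x₀ : EuclideanSpace ℝ (Fin n)) (ρ : ℝ), 0 < ρ → Metric.ball x₀ ρ ⊆ Ω →
      (φ (((volume (Metric.ball x₀ ρ)).toReal) ^ ((n : ℝ)⁻¹)))⁻¹ *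
        ⨍ x in Metric.ball x₀ ρ, |u x| ≤ K) :
    ∀ᵐ x ∂(volume.restrict Ω), u x = 0 :=
  stmt19_general n hn Ω hopen φ hφpos hadm hinf u hint K hK
end
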